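/- Let (X, cl) be a finitary matroid with rank rk, δ a quasi-endomorphism, A ⊆ X a finite set and B ⊆ X with δB ⊆ B. Then the sequence n ↦ rk(δⁿA | J^{n−1}(A) ∪ B) is non-increasing, hence eventually constant, and rk^δ(A | B) = lim_{k→∞} rk(δᵏA | J^{k−1}(A) ∪ B), where rk^δ is the rank function of the matroid (X, cl^δ). -/

import Mathlib

/-!
For finite `A`, the ranks `g(n) = rk(J^{n-1}(A) | B)` are the partial sums of
`rₙ = rk(δⁿA | J^{n-1}(A) ∪ B)`, and the quasi-endomorphism inequality makes `rₙ`
non-increasing; so `g(n) = λ·n + O(1)` with `λ` the eventual value of `rₙ`.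

An element `a` outside `cl^δ(C)` has every jet `J^{n-1}(a)` independent over `J^∞(C)`: as soon as
one `δⁿa` depends on `J^∞(C)` and the earlier derivatives, applying `δ` propagates the
dependence to all later ones. Hence a `cl^δ`-independent `S ⊆ A` gives `g(n) ≥ |S|·n`, so
`|S| ≤ λ`. Conversely, if `a ∈ cl^δ(B ∪ A∖{a})`, the same propagation shows that adding `a`
raises `g` by a bounded amount only, so removing it does not lower `λ`; removing such elements
until none is left yields a `cl^δ`-independent `S ⊆ A` with `λ ≤ |S|`.
-/

/-- A finitary matroid (pregeometry) on a type `X`, given by a closure operator. -/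
structure Pregeometry (X : Type*) where
  cl : Set X → Set X
  subset_cl : ∀ A : Set X, A ⊆ cl A
  mono : ∀ A B : Set X, A ⊆ B → cl A ⊆ cl B
  cl_cl : ∀ A : Set X, cl (cl A) = cl A
  finitary : ∀ (A : Set X) (a : X), a ∈ cl A → ∃ F : Finset X, ↑F ⊆ A ∧ a ∈ cl ↑F
  exchange : ∀ (a b : X) (A : Set X), a ∈ cl (A ∪ {b}) → a ∉ cl A → b ∈ cl (A ∪ {a})

/-- `S` is independent over `B` with respect to a closure operator. -/
def clIndep {X : Type*} (cl : Set X → Set X) (B S : Set X) : Prop :=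
  ∀ s ∈ S, s ∉ cl (B ∪ (S \ {s}))

/-- The rank of `A` over `B` with respect to a closure operator: the supremum of the
cardinalities of subsets of `A` independent over `B`. -/
noncomputable def clRank {X : Type*} (cl : Set X → Set X) (A B : Set X) : Cardinal :=
  ⨆ S : {S : Set X // S ⊆ A ∧ clIndep cl B S}, Cardinal.mk S.1

/-- The set of all iterated images `δⁱ a` for `a ∈ A`, `i < ω` (the infinite jet). -/
def Jinf {X : Type*} (δ : X → X) (A : Set X) : Set X :=
  ⋃ a ∈ A, Set.range fun i : ℕ => δ^[i] a

/-- The jet `{δⁱ a : a ∈ A, i ≤ n}`. -/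
def Jle {X : Type*} (δ : X → X) (A : Set X) (n : ℕ) : Set X :=
  ⋃ a ∈ A, (fun i : ℕ => δ^[i] a) '' {i | i ≤ n}

/-- The jet `{δⁱ a : a ∈ A, i < n}` (so `Jlt δ A 0 = ∅`, playing the role of `J^{-1}`). -/
def Jlt {X : Type*} (δ : X → X) (A : Set X) (n : ℕ) : Set X :=
  ⋃ a ∈ A, (fun i : ℕ => δ^[i] a) '' {i | i < n}

/-- `δ` is a quasi-endomorphism of the pregeometry `P`:
`rk(δA | A ∪ B ∪ δB) ≤ rk(A | B)` for all `A, B`. -/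
def IsQuasiEndo {X : Type*} (P : Pregeometry X) (δ : X → X) : Prop :=
  ∀ A B : Set X, clRank P.cl (δ '' A) (A ∪ B ∪ δ '' B) ≤ clRank P.cl A B

/-- The `δ`-closure operator: `a ∈ cl^δ(B)` iff `rk(J^∞(a) | J^∞(B))` is finite. -/
noncomputable def clDelta {X : Type*} (P : Pregeometry X) (δ : X → X) : Set X → Set X :=
  fun B => {a | clRank P.cl (Jinf δ {a}) (Jinf δ B) < Cardinal.aleph0}

open Set

section ClosureRank

variable {X : Type*} {cl : Set X → Set X} {A B S : Set X}

theorem mk_le_clRank (hSA : S ⊆ A) (hS : clIndep cl B S) : Cardinal.mk S ≤ clRank cl A B :=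
  le_ciSup (f := fun S : {S : Set X // S ⊆ A ∧ clIndep cl B S} => Cardinal.mk S.1)
    Cardinal.bddAbove_of_small ⟨S, hSA, hS⟩

theorem natCast_ncard_le_clRank (hSA : S ⊆ A) (hS : clIndep cl B S) (hSfin : S.Finite) :
    (S.ncard : Cardinal) ≤ clRank cl A B :=
  (Set.cast_ncard hSfin).le.trans (mk_le_clRank hSA hS)

theorem clRank_le_natCast {m : ℕ} (h : ∀ S ⊆ A, clIndep cl B S → S.encard ≤ m) :
    clRank cl A B ≤ m :=
  ciSup_le' fun S => Cardinal.toENat_le_natCast.mp (h S.1 S.2.1 S.2.2)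

end ClosureRank

section Jets

variable {X : Type*} (δ : X → X) {A B C F : Set X} {x : X} {m n : ℕ}

@[simp]
theorem mem_Jlt : x ∈ Jlt δ A n ↔ ∃ a ∈ A, ∃ i < n, δ^[i] a = x := by
  simp [Jlt]

theorem Jinf_eq_iUnion_Jlt (A : Set X) : Jinf δ A = ⋃ n, Jlt δ A n := by
  ext x
  simp only [Jinf, mem_iUnion, mem_range, mem_Jlt]
  exact ⟨fun ⟨a, ha, i, hi⟩ => ⟨i + 1, a, ha, i, i.lt_succ_self, hi⟩,
    fun ⟨_, a, ha, i, _, hi⟩ => ⟨a, ha, i, hi⟩⟩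

theorem Jlt_subset_Jinf (A : Set X) (n : ℕ) : Jlt δ A n ⊆ Jinf δ A := by
  rw [Jinf_eq_iUnion_Jlt]
  exact subset_iUnion (Jlt δ A) n

theorem Jlt_zero (A : Set X) : Jlt δ A 0 = ∅ := by
  ext; simp

theorem Jlt_succ (A : Set X) (n : ℕ) : Jlt δ A (n + 1) = Jlt δ A n ∪ δ^[n] '' A := by
  ext x
  simp only [mem_Jlt, mem_union, mem_image, Nat.lt_succ_iff_lt_or_eq]
  grind

theorem subset_Jlt_one (A : Set X) : A ⊆ Jlt δ A 1 :=
  fun a ha => (mem_Jlt δ).mpr ⟨a, ha, 0, zero_lt_one, rfl⟩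

theorem Jlt_mono (h : m ≤ n) (A : Set X) : Jlt δ A m ⊆ Jlt δ A n := by
  intro x
  simp only [mem_Jlt]
  rintro ⟨a, ha, i, hi, rfl⟩
  exact ⟨a, ha, i, hi.trans_le h, rfl⟩

theorem Jlt_subset_Jlt (h : A ⊆ B) (n : ℕ) : Jlt δ A n ⊆ Jlt δ B n := by
  intro x
  simp only [mem_Jlt]
  rintro ⟨a, ha, i, hi, rfl⟩
  exact ⟨a, h ha, i, hi, rfl⟩

theorem Jlt_union (A B : Set X) (n : ℕ) : Jlt δ (A ∪ B) n = Jlt δ A n ∪ Jlt δ B n := by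
  simp only [Jlt, biUnion_union]

theorem Jlt_empty (n : ℕ) : Jlt δ ∅ n = ∅ := by
  ext; simp

theorem Jlt_finite (hA : A.Finite) (n : ℕ) : (Jlt δ A n).Finite :=
  hA.biUnion fun _ _ => (finite_lt_nat n).image _

theorem Jlt_subset_of_image_subset (hB : δ '' B ⊆ B) (n : ℕ) : Jlt δ B n ⊆ B := by
  intro x
  simp only [mem_Jlt]
  rintro ⟨b, hb, i, -, rfl⟩
  exact (mapsTo_iff_image_subset.mpr hB).iterate i hb

theorem image_Jlt_subset (A : Set X) (n : ℕ) : δ '' Jlt δ A n ⊆ Jlt δ A (n + 1) := by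
  rintro _ ⟨x, hx, rfl⟩
  obtain ⟨a, ha, i, hi, rfl⟩ := (mem_Jlt δ).mp hx
  exact (mem_Jlt δ).mpr
    ⟨a, ha, i + 1, Nat.succ_lt_succ hi, Function.iterate_succ_apply' δ i a⟩

theorem image_Jinf_subset (A : Set X) : δ '' Jinf δ A ⊆ Jinf δ A := by
  rw [Jinf_eq_iUnion_Jlt, image_iUnion]
  exact iUnion_subset fun n => (image_Jlt_subset δ A n).trans (subset_iUnion _ _)

theorem Jlt_Jlt_subset (A : Set X) (m n : ℕ) :
    Jlt δ (Jlt δ A m) (n + 1) ⊆ Jlt δ A (m + n) := by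
  intro x
  simp only [mem_Jlt]
  rintro ⟨_, ⟨a, ha, i, hi, rfl⟩, j, hj, rfl⟩
  exact ⟨a, ha, j + i, by omega, Function.iterate_add_apply δ j i a⟩

theorem Jlt_add (A : Set X) (n k : ℕ) :
    Jlt δ A (n + k) = Jlt δ A n ∪ δ^[n] '' Jlt δ A k := by
  induction k with
  | zero => simp [Jlt_zero]
  | succ k ih =>
    rw [← add_assoc, Jlt_succ, ih, Jlt_succ, image_union, image_image, union_assoc]
    simp only [← Function.iterate_add_apply]

theorem exists_subset_Jlt_union (hF : F.Finite) (h : F ⊆ Jinf δ A ∪ C) :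
    ∃ k, F ⊆ Jlt δ A k ∪ C := by
  rw [Jinf_eq_iUnion_Jlt, iUnion_union] at h
  have hdir : Directed (· ⊆ ·) fun k => Jlt δ A k ∪ C :=
    Monotone.directed_le fun _ _ hmn => union_subset_union_left C (Jlt_mono δ hmn A)
  simpa using hdir.exists_mem_subset_of_finset_subset_biUnion (s := hF.toFinset) (by simpa using h)

end Jets

section NatSequences

open Finset in
theorem iInf_mul_le_sum_range (f : ℕ → ℕ) (n : ℕ) :
    (⨅ i, f i) * n ≤ ∑ i ∈ range n, f i := by
  simpa [mul_comm] using card_nsmul_le_sum (range n) f _ fun i _ => ciInf_le (OrderBot.bddBelow _) i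

theorem Antitone.exists_forall_ge_eq_iInf {f : ℕ → ℕ} (hf : Antitone f) :
    ∃ N, ∀ k ≥ N, f k = ⨅ i, f i := by
  obtain ⟨N, hN⟩ := ciInf_mem f
  exact ⟨N, fun k hk => le_antisymm (hN ▸ hf hk) (ciInf_le (OrderBot.bddBelow _) k)⟩

open Finset in
theorem Antitone.exists_sum_range_le {f : ℕ → ℕ} (hf : Antitone f) :
    ∃ C, ∀ n, ∑ i ∈ range n, f i ≤ C + (⨅ i, f i) * n := by
  obtain ⟨N, hN⟩ := hf.exists_forall_ge_eq_iInf
  refine ⟨∑ i ∈ range N, f i, fun n => ?_⟩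
  induction n with
  | zero => simp
  | succ n ih =>
    rcases lt_or_ge n N with h | h
    · exact (sum_le_sum_of_subset (range_subset_range.mpr h)).trans (Nat.le_add_right _ _)
    · rw [sum_range_succ, hN n h]
      linarith

theorem Nat.le_of_forall_mul_le_add_mul {r r' K : ℕ} (h : ∀ n, r * n ≤ K + r' * n) :
    r ≤ r' := by
  by_contra! hlt
  nlinarith [h (K + 1)]

end NatSequences

namespace Pregeometry

variable {X : Type*} (P : Pregeometry X) {δ : X → X} {A A' B B' C D E S T : Set X} {a x : X}

theorem cl_subset_cl_of_subset_cl (h : A ⊆ P.cl B) : P.cl A ⊆ P.cl B :=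
  (P.mono _ _ h).trans (P.cl_cl B).subset

theorem clIndep_of_subset (hS : clIndep P.cl B S) (hTS : T ⊆ S) : clIndep P.cl B T :=
  fun s hs hcl =>
    hS s (hTS hs) (P.mono _ _ (union_subset_union_right B (sdiff_subset_sdiff_left hTS)) hcl)

theorem clIndep_of_base_subset (hS : clIndep P.cl B' S) (hB : B ⊆ B') : clIndep P.cl B S :=
  fun s hs hcl => hS s hs (P.mono _ _ (union_subset_union_left _ hB) hcl)

theorem clIndep_insert (hS : clIndep P.cl B S) (ha : a ∉ P.cl (B ∪ S)) :
    clIndep P.cl B (insert a S) := by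
  have haS : a ∉ S := fun h => ha (P.subset_cl _ (mem_union_right B h))
  rintro s (rfl | hsS)
  · rwa [insert_sdiff_self_of_notMem haS]
  · have hsa : s ≠ a := by rintro rfl; exact haS hsS
    intro hs
    -- otherwise exchanging `s` for `a` would put `a` into `cl (B ∪ S)`
    have hs' : s ∈ P.cl ((B ∪ S \ {s}) ∪ {a}) := by
      rw [insert_sdiff_of_notMem _ (by simpa using hsa.symm), union_insert] at hs
      rwa [union_singleton]
    refine ha (P.mono _ _ ?_ (P.exchange s a _ hs' (hS s hsS)))
    exact union_subset (union_subset_union_right B sdiff_subset) (by simpa using Or.inr hsS)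

theorem clIndep_union (hS : clIndep P.cl B S) (hT : clIndep P.cl (B ∪ S) T) (hTfin : T.Finite) :
    clIndep P.cl B (S ∪ T) := by
  induction T, hTfin using Set.Finite.induction_on with
  | empty => rwa [union_empty]
  | @insert t T htT _ ih =>
    rw [union_insert]
    refine clIndep_insert P (ih (P.clIndep_of_subset hT (subset_insert t T))) ?_
    have := hT t (mem_insert t T)
    rwa [insert_sdiff_self_of_notMem htT, union_assoc] at this

theorem encard_le_of_clIndep_of_subset_cl (hT : T.Finite) (hS : clIndep P.cl B S)
    (hST : S ⊆ P.cl (B ∪ T)) : S.encard ≤ T.encard := by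
  induction T, hT using Set.Finite.induction_on generalizing B S with
  | empty =>
    rw [union_empty] at hST
    have : S = ∅ := eq_empty_of_forall_notMem fun s hs =>
      hS s hs (P.mono _ _ subset_union_left (hST hs))
    simp [this]
  | @insert t T htT _ ih =>
    by_cases hST' : S ⊆ P.cl (B ∪ T)
    · exact (ih hS hST').trans (encard_le_encard (subset_insert t T))
    obtain ⟨s, hsS, hsT⟩ := not_subset.mp hST'
    -- Steinitz step: move `s` into the base and drop `t`, which it now spans
    have ht : t ∈ P.cl (insert s B ∪ T) := by
      have hs : s ∈ P.cl ((B ∪ T) ∪ {t}) := by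
        simpa [union_insert, union_singleton] using hST hsS
      simpa [union_singleton, insert_union] using P.exchange s t _ hs hsT
    have hspan : B ∪ insert t T ⊆ P.cl (insert s B ∪ T) := by
      refine union_subset (fun b hb => P.subset_cl _ (by simp [hb])) (insert_subset ht ?_)
      exact fun x hx => P.subset_cl _ (mem_union_right _ hx)
    have hindep : clIndep P.cl (insert s B) (S \ {s}) := by
      intro x hx hcl
      refine hS x hx.1 (P.mono _ _ ?_ hcl)
      rintro y ((rfl | hy) | ⟨⟨hyS, -⟩, hyx⟩)
      · exact mem_union_right _ ⟨hsS, fun h => hx.2 (h ▸ rfl)⟩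
      · exact mem_union_left _ hy
      · exact mem_union_right _ ⟨hyS, hyx⟩
    have := ih hindep ((sdiff_subset.trans hST).trans (P.cl_subset_cl_of_subset_cl hspan))
    rw [← encard_sdiff_singleton_add_one hsS, encard_insert_of_notMem htT]
    gcongr

theorem ncard_le_of_clIndep_of_subset_cl (hT : T.Finite) (hS : clIndep P.cl B S)
    (hST : S ⊆ P.cl (B ∪ T)) : S.ncard ≤ T.ncard := by
  have := P.encard_le_of_clIndep_of_subset_cl hT hS hST
  rw [← hT.cast_ncard_eq] at this
  exact (encard_le_coe_iff_finite_ncard_le.mp this).2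

theorem clRank_le_ncard_of_subset_cl (hT : T.Finite) (hA : A ⊆ P.cl (B ∪ T)) :
    clRank P.cl A B ≤ T.ncard :=
  clRank_le_natCast fun S hSA hS => by
    rw [hT.cast_ncard_eq]
    exact P.encard_le_of_clIndep_of_subset_cl hT hS (hSA.trans hA)

theorem clRank_anti_right (hB : B ⊆ B') : clRank P.cl A B' ≤ clRank P.cl A B :=
  ciSup_le' fun S => mk_le_clRank S.2.1 (P.clIndep_of_base_subset S.2.2 hB)

theorem mem_cl_of_clRank_singleton_eq_zero (h : clRank P.cl {x} B = 0) : x ∈ P.cl B := by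
  by_contra hx
  have hind : clIndep P.cl B {x} := by simpa [clIndep] using hx
  have := natCast_ncard_le_clRank subset_rfl hind (finite_singleton x)
  simp [h] at this

def IsBasis (S A B : Set X) : Prop :=
  S ⊆ A ∧ clIndep P.cl B S ∧ A ⊆ P.cl (B ∪ S)

theorem exists_isBasis (hA : A.Finite) (B : Set X) : ∃ S, P.IsBasis S A B := by
  induction A, hA using Set.Finite.induction_on with
  | empty => exact ⟨∅, empty_subset _, fun s hs => hs.elim, empty_subset _⟩
  | @insert a A _ _ ih =>
    obtain ⟨S, hSA, hS, hAS⟩ := ih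
    by_cases ha : a ∈ P.cl (B ∪ S)
    · exact ⟨S, hSA.trans (subset_insert a A), hS, insert_subset ha hAS⟩
    refine ⟨insert a S, insert_subset_insert hSA, P.clIndep_insert hS ha, ?_⟩
    refine insert_subset (P.subset_cl _ (by simp)) (hAS.trans (P.mono _ _ ?_))
    exact union_subset_union_right B (subset_insert a S)

theorem clRank_eq_ncard_of_isBasis (hS : P.IsBasis S A B) (hSfin : S.Finite) :
    clRank P.cl A B = S.ncard :=
  le_antisymm (P.clRank_le_ncard_of_subset_cl hSfin hS.2.2)
    (natCast_ncard_le_clRank hS.1 hS.2.1 hSfin)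

/-- Junk value `0` when the rank is infinite. -/
noncomputable def rk (A B : Set X) : ℕ :=
  (clRank P.cl A B).toNat

theorem rk_eq_ncard_of_isBasis (hS : P.IsBasis S A B) (hSfin : S.Finite) :
    P.rk A B = S.ncard := by
  rw [rk, P.clRank_eq_ncard_of_isBasis hS hSfin, Cardinal.toNat_natCast]

theorem clRank_eq_rk (hA : A.Finite) : clRank P.cl A B = P.rk A B := by
  obtain ⟨S, hS⟩ := P.exists_isBasis hA B
  have hSfin := hA.subset hS.1
  rw [P.clRank_eq_ncard_of_isBasis hS hSfin, P.rk_eq_ncard_of_isBasis hS hSfin]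

theorem rk_le_ncard_of_subset_cl (hA : A.Finite) (hT : T.Finite) (h : A ⊆ P.cl (B ∪ T)) :
    P.rk A B ≤ T.ncard := by
  obtain ⟨S, hS⟩ := P.exists_isBasis hA B
  rw [P.rk_eq_ncard_of_isBasis hS (hA.subset hS.1)]
  exact P.ncard_le_of_clIndep_of_subset_cl hT hS.2.1 (hS.1.trans h)

theorem rk_le_ncard (hA : A.Finite) : P.rk A B ≤ A.ncard :=
  P.rk_le_ncard_of_subset_cl hA hA (subset_union_right.trans (P.subset_cl _))

theorem rk_empty : P.rk ∅ B = 0 :=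
  Nat.eq_zero_of_le_zero (by simpa using P.rk_le_ncard (B := B) finite_empty)

theorem ncard_le_rk (hA : A.Finite) (hSA : S ⊆ A) (hS : clIndep P.cl B S) :
    S.ncard ≤ P.rk A B := by
  obtain ⟨S₀, hS₀⟩ := P.exists_isBasis hA B
  rw [P.rk_eq_ncard_of_isBasis hS₀ (hA.subset hS₀.1)]
  exact P.ncard_le_of_clIndep_of_subset_cl (hA.subset hS₀.1) hS (hSA.trans hS₀.2.2)

theorem rk_mono_left (hA' : A'.Finite) (h : A ⊆ A') : P.rk A B ≤ P.rk A' B := by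
  obtain ⟨S, hS⟩ := P.exists_isBasis (hA'.subset h) B
  rw [P.rk_eq_ncard_of_isBasis hS (hA'.subset (hS.1.trans h))]
  exact P.ncard_le_rk hA' (hS.1.trans h) hS.2.1

theorem rk_anti_right (hA : A.Finite) (h : B ⊆ B') : P.rk A B' ≤ P.rk A B := by
  obtain ⟨S, hS⟩ := P.exists_isBasis hA B'
  rw [P.rk_eq_ncard_of_isBasis hS (hA.subset hS.1)]
  exact P.ncard_le_rk hA hS.1 (P.clIndep_of_base_subset hS.2.1 h)

theorem rk_union (hA : A.Finite) (hA' : A'.Finite) :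
    P.rk (A ∪ A') B = P.rk A B + P.rk A' (B ∪ A) := by
  obtain ⟨S, hSA, hS, hAS⟩ := P.exists_isBasis hA B
  obtain ⟨T, hTA, hT, hAT⟩ := P.exists_isBasis hA' (B ∪ A)
  have hSfin := hA.subset hSA
  have hTfin := hA'.subset hTA
  have hspan : B ∪ A ∪ T ⊆ P.cl (B ∪ (S ∪ T)) := by
    refine union_subset (union_subset ?_ ?_) ?_
    · exact subset_union_left.trans (P.subset_cl _)
    · exact hAS.trans (P.mono _ _ (union_subset_union_right B subset_union_left))
    · exact (subset_union_right.trans subset_union_right).trans (P.subset_cl _)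
  have hbasis : P.IsBasis (S ∪ T) (A ∪ A') B :=
    ⟨union_subset_union hSA hTA,
      P.clIndep_union hS (P.clIndep_of_base_subset hT (union_subset_union_right B hSA)) hTfin,
      union_subset ((subset_union_right.trans subset_union_left).trans hspan)
        (hAT.trans (P.cl_subset_cl_of_subset_cl hspan))⟩
  have hST : Disjoint S T := disjoint_right.mpr fun t htT htS =>
    hT t htT (P.subset_cl _ (mem_union_left _ (mem_union_right B (hSA htS))))
  rw [P.rk_eq_ncard_of_isBasis hbasis (hSfin.union hTfin), ncard_union_eq hST hSfin hTfin,
    P.rk_eq_ncard_of_isBasis ⟨hSA, hS, hAS⟩ hSfin,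
    P.rk_eq_ncard_of_isBasis ⟨hTA, hT, hAT⟩ hTfin]

theorem apply_mem_cl_union_image (hδ : IsQuasiEndo P δ) (hx : x ∈ P.cl C) :
    δ x ∈ P.cl (C ∪ δ '' C) := by
  have hx0 : clRank P.cl {x} C = 0 := by
    simpa using P.clRank_eq_ncard_of_isBasis (S := ∅) ⟨empty_subset _, fun _ h => h.elim,
      by simpa using hx⟩ finite_empty
  have hδx := hδ {x} C
  rw [hx0, nonpos_iff_eq_zero, image_singleton] at hδx
  refine P.cl_subset_cl_of_subset_cl ?_ (P.mem_cl_of_clRank_singleton_eq_zero hδx)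
  refine union_subset (union_subset ?_ ?_) ?_
  · exact singleton_subset_iff.mpr (P.mono _ _ subset_union_left hx)
  · exact subset_union_left.trans (P.subset_cl _)
  · exact subset_union_right.trans (P.subset_cl _)

theorem iterate_mem_cl_Jlt (hδ : IsQuasiEndo P δ) (hx : x ∈ P.cl C) (j : ℕ) :
    δ^[j] x ∈ P.cl (Jlt δ C (j + 1)) := by
  induction j with
  | zero => exact P.mono _ _ (subset_Jlt_one δ C) hx
  | succ j ih =>
    rw [Function.iterate_succ_apply']
    exact P.mono _ _ (union_subset (Jlt_mono δ (j + 1).le_succ C) (image_Jlt_subset δ C _))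
      (P.apply_mem_cl_union_image hδ ih)

theorem Jlt_singleton_subset_cl (hδ : IsQuasiEndo P δ) (hB : δ '' B ⊆ B) {m : ℕ}
    (hm : δ^[m] a ∈ P.cl (B ∪ D ∪ Jlt δ {a} m)) (n : ℕ) :
    Jlt δ {a} n ⊆ P.cl (B ∪ Jlt δ D n ∪ Jlt δ {a} m) := by
  induction n with
  | zero => simp [Jlt_zero]
  | succ n ih =>
    have hmono :
        P.cl (B ∪ Jlt δ D n ∪ Jlt δ {a} m) ⊆ P.cl (B ∪ Jlt δ D (n + 1) ∪ Jlt δ {a} m) :=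
      P.mono _ _ (union_subset_union_left _ (union_subset_union_right B (Jlt_mono δ n.le_succ D)))
    rw [Jlt_succ, image_singleton]
    refine union_subset (ih.trans hmono) (singleton_subset_iff.mpr ?_)
    rcases lt_or_ge n m with hnm | hmn
    · exact P.subset_cl _ (mem_union_right _ ((mem_Jlt δ).mpr ⟨a, rfl, n, hnm, rfl⟩))
    obtain ⟨j, rfl⟩ := Nat.exists_eq_add_of_le hmn
    rw [show δ^[m + j] a = δ^[j] (δ^[m] a) by rw [← Function.iterate_add_apply, add_comm]]
    refine P.cl_subset_cl_of_subset_cl ?_ (P.iterate_mem_cl_Jlt hδ hm j)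
    rw [Jlt_union, Jlt_union]
    refine union_subset (union_subset ?_ ?_) ((Jlt_Jlt_subset δ {a} m j).trans (ih.trans hmono))
    · exact (Jlt_subset_of_image_subset δ hB _).trans
        (subset_union_left.trans subset_union_left |>.trans (P.subset_cl _))
    · exact (Jlt_mono δ (by omega) D).trans
        ((subset_union_right.trans subset_union_left).trans (P.subset_cl _))

theorem clIndep_Jlt_singleton (h : ∀ n, δ^[n] a ∉ P.cl (E ∪ Jlt δ {a} n)) (n : ℕ) :
    clIndep P.cl E (Jlt δ {a} n) ∧ (Jlt δ {a} n).ncard = n := by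
  induction n with
  | zero => simp [Jlt_zero, clIndep]
  | succ n ih =>
    have hnew : δ^[n] a ∉ Jlt δ {a} n := fun hmem =>
      h n (P.subset_cl _ (mem_union_right E hmem))
    rw [Jlt_succ, image_singleton, union_singleton]
    refine ⟨P.clIndep_insert ih.1 (h n), ?_⟩
    rw [ncard_insert_of_notMem hnew (Jlt_finite δ (finite_singleton a) n), ih.2]

theorem mem_clDelta_iff (hδ : IsQuasiEndo P δ) :
    a ∈ clDelta P δ C ↔ ∃ n, δ^[n] a ∈ P.cl (Jinf δ C ∪ Jlt δ {a} n) := by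
  constructor
  · intro ha
    by_contra! h
    obtain ⟨d, hd⟩ := Cardinal.lt_aleph0.mp ha
    obtain ⟨hind, hcard⟩ := P.clIndep_Jlt_singleton h (d + 1)
    have := natCast_ncard_le_clRank (Jlt_subset_Jinf δ {a} (d + 1)) hind
      (Jlt_finite δ (finite_singleton a) _)
    rw [hcard, hd, Nat.cast_le] at this
    omega
  · rintro ⟨m, hm⟩
    have hspan : Jinf δ {a} ⊆ P.cl (Jinf δ C ∪ Jlt δ {a} m) := by
      rw [Jinf_eq_iUnion_Jlt]
      refine iUnion_subset fun n => ?_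
      simpa [Jlt_empty] using
        P.Jlt_singleton_subset_cl hδ (image_Jinf_subset δ C) (D := ∅) (by simpa using hm) n
    exact (P.clRank_le_ncard_of_subset_cl (Jlt_finite δ (finite_singleton a) m) hspan).trans_lt
      Cardinal.natCast_lt_aleph0

theorem le_rk_Jlt_of_notMem_clDelta (hδ : IsQuasiEndo P δ) (ha : a ∉ clDelta P δ C) (n : ℕ) :
    n ≤ P.rk (Jlt δ {a} n) (Jinf δ C) := by
  rw [P.mem_clDelta_iff hδ] at ha
  push Not at ha
  obtain ⟨hind, hcard⟩ := P.clIndep_Jlt_singleton ha n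
  have := P.ncard_le_rk (Jlt_finite δ (finite_singleton a) n) subset_rfl hind
  rwa [hcard] at this

noncomputable def stepRank (δ : X → X) (A B : Set X) (n : ℕ) : ℕ :=
  P.rk (δ^[n] '' A) (Jlt δ A n ∪ B)

noncomputable def eventualRank (δ : X → X) (A B : Set X) : ℕ :=
  ⨅ n, P.stepRank δ A B n

theorem clRank_image_iterate_succ_le (hδ : IsQuasiEndo P δ) (hB : δ '' B ⊆ B) (A : Set X)
    (n : ℕ) : clRank P.cl (δ^[n+1] '' A) (Jlt δ A (n+1) ∪ B)
      ≤ clRank P.cl (δ^[n] '' A) (Jlt δ A n ∪ B) := by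
  have hbase :
      δ^[n] '' A ∪ (Jlt δ A n ∪ B) ∪ δ '' (Jlt δ A n ∪ B) ⊆ Jlt δ A (n + 1) ∪ B := by
    refine union_subset (union_subset ?_ ?_) ?_
    · exact (Jlt_succ δ A n ▸ subset_union_right).trans subset_union_left
    · exact union_subset_union_left B (Jlt_mono δ n.le_succ A)
    · exact image_union δ _ _ ▸ union_subset_union (image_Jlt_subset δ A n) hB
  rw [Function.iterate_succ', image_comp]
  exact (P.clRank_anti_right hbase).trans (hδ _ _)

theorem stepRank_antitone (hδ : IsQuasiEndo P δ) (hA : A.Finite) (hB : δ '' B ⊆ B) :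
    Antitone (P.stepRank δ A B) :=
  antitone_nat_of_succ_le fun n => by
    have := P.clRank_image_iterate_succ_le hδ hB A n
    rwa [P.clRank_eq_rk (hA.image _), P.clRank_eq_rk (hA.image _), Nat.cast_le] at this

theorem rk_Jlt_eq_sum (hA : A.Finite) (n : ℕ) :
    P.rk (Jlt δ A n) B = ∑ i ∈ Finset.range n, P.stepRank δ A B i := by
  induction n with
  | zero => simp [Jlt_zero, rk_empty]
  | succ n ih =>
    rw [Jlt_succ, P.rk_union (Jlt_finite δ hA n) (hA.image _), ih, Finset.sum_range_succ,
      stepRank, union_comm B]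

theorem eventualRank_mul_le_rk_Jlt (hA : A.Finite) (n : ℕ) :
    P.eventualRank δ A B * n ≤ P.rk (Jlt δ A n) B :=
  P.rk_Jlt_eq_sum hA n ▸ iInf_mul_le_sum_range _ n

theorem exists_rk_Jlt_le (hδ : IsQuasiEndo P δ) (hA : A.Finite) (hB : δ '' B ⊆ B) :
    ∃ C, ∀ n, P.rk (Jlt δ A n) B ≤ C + P.eventualRank δ A B * n := by
  simpa only [← P.rk_Jlt_eq_sum hA, eventualRank] using
    (P.stepRank_antitone hδ hA hB).exists_sum_range_le

theorem exists_stepRank_eq (hδ : IsQuasiEndo P δ) (hA : A.Finite) (hB : δ '' B ⊆ B) :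
    ∃ N, ∀ k ≥ N, P.stepRank δ A B k = P.eventualRank δ A B :=
  (P.stepRank_antitone hδ hA hB).exists_forall_ge_eq_iInf

theorem ncard_mul_le_rk_Jlt (hδ : IsQuasiEndo P δ) (hS : S.Finite)
    (hind : clIndep (clDelta P δ) B S) (n : ℕ) :
    S.ncard * n ≤ P.rk (Jlt δ S n) B := by
  suffices ∀ T ⊆ S, T.ncard * n ≤ P.rk (Jlt δ T n) B from this S subset_rfl
  intro T hTS
  induction T, hS.subset hTS using Set.Finite.induction_on with
  | empty => simp
  | @insert s T hsT hT ih =>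
    have hTS' := (subset_insert s T).trans hTS
    have hbase : B ∪ Jlt δ T n ⊆ Jinf δ (B ∪ S \ {s}) := by
      refine subset_trans ?_ (Jlt_subset_Jinf δ _ (n + 1))
      rw [Jlt_union]
      refine union_subset_union ((subset_Jlt_one δ B).trans (Jlt_mono δ (by omega) B)) ?_
      have hTs : T ⊆ S \ {s} := fun x hx =>
        ⟨hTS' hx, fun hxs => hsT (mem_singleton_iff.mp hxs ▸ hx)⟩
      exact (Jlt_subset_Jlt δ hTs n).trans (Jlt_mono δ n.le_succ _)
    rw [ncard_insert_of_notMem hsT hT, add_mul, one_mul, insert_eq, Jlt_union, union_comm,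
      P.rk_union (Jlt_finite δ hT n) (Jlt_finite δ (finite_singleton s) n)]
    have hs := P.le_rk_Jlt_of_notMem_clDelta hδ (hind s (hTS (mem_insert s T))) n
    exact add_le_add (ih hTS')
      (hs.trans (P.rk_anti_right (Jlt_finite δ (finite_singleton s) n) hbase))

theorem ncard_le_eventualRank (hδ : IsQuasiEndo P δ) (hA : A.Finite) (hB : δ '' B ⊆ B)
    (hSA : S ⊆ A) (hind : clIndep (clDelta P δ) B S) : S.ncard ≤ P.eventualRank δ A B := by
  obtain ⟨K, hK⟩ := P.exists_rk_Jlt_le hδ hA hB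
  refine Nat.le_of_forall_mul_le_add_mul (K := K) fun n => ?_
  calc S.ncard * n ≤ P.rk (Jlt δ S n) B := P.ncard_mul_le_rk_Jlt hδ (hA.subset hSA) hind n
    _ ≤ P.rk (Jlt δ A n) B := P.rk_mono_left (Jlt_finite δ hA n) (Jlt_subset_Jlt δ hSA n)
    _ ≤ K + P.eventualRank δ A B * n := hK n

theorem exists_iterate_mem_cl_of_mem_clDelta (hδ : IsQuasiEndo P δ) (hB : δ '' B ⊆ B)
    (ha : a ∈ clDelta P δ (B ∪ A)) :
    ∃ m k, δ^[m] a ∈ P.cl (B ∪ Jlt δ A k ∪ Jlt δ {a} m) := by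
  obtain ⟨m, hm⟩ := (P.mem_clDelta_iff hδ).mp ha
  obtain ⟨F, hF, haF⟩ := P.finitary _ _ hm
  obtain ⟨k, hk⟩ := exists_subset_Jlt_union δ F.finite_toSet hF
  refine ⟨m, k, P.mono _ _ (hk.trans ?_) haF⟩
  rw [Jlt_union]
  exact union_subset_union_left _ (union_subset_union_left _ (Jlt_subset_of_image_subset δ hB k))

theorem exists_rk_Jlt_union_singleton_le (hδ : IsQuasiEndo P δ) (hA : A.Finite)
    (hB : δ '' B ⊆ B) (ha : a ∈ clDelta P δ (B ∪ A)) :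
    ∃ c, ∀ n, P.rk (Jlt δ (A ∪ {a}) n) B ≤ P.rk (Jlt δ A n) B + c := by
  obtain ⟨m, k, hmk⟩ := P.exists_iterate_mem_cl_of_mem_clDelta hδ hB ha
  refine ⟨(Jlt δ A k).ncard + (Jlt δ {a} m).ncard, fun n => ?_⟩
  have hJJ : Jlt δ (Jlt δ A k) n ⊆ Jlt δ A n ∪ δ^[n] '' Jlt δ A k := by
    rw [← Jlt_add, add_comm]
    exact (Jlt_mono δ n.le_succ _).trans (Jlt_Jlt_subset δ A k n)
  have hspan :
      Jlt δ {a} n ⊆ P.cl ((B ∪ Jlt δ A n) ∪ (δ^[n] '' Jlt δ A k ∪ Jlt δ {a} m)) := by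
    refine (P.Jlt_singleton_subset_cl hδ hB hmk n).trans (P.mono _ _ ?_)
    intro x hx
    have := @hJJ x
    simp only [mem_union] at hx this ⊢
    tauto
  have hfin := (Jlt_finite δ hA k).image δ^[n]
  have hle := P.rk_le_ncard_of_subset_cl (Jlt_finite δ (finite_singleton a) n)
    (hfin.union (Jlt_finite δ (finite_singleton a) m)) hspan
  rw [Jlt_union, P.rk_union (Jlt_finite δ hA n) (Jlt_finite δ (finite_singleton a) n)]
  have := (ncard_union_le (δ^[n] '' Jlt δ A k) (Jlt δ {a} m)).trans
    (Nat.add_le_add_right (ncard_image_le (Jlt_finite δ hA k)) _)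
  omega

theorem eventualRank_union_singleton_le (hδ : IsQuasiEndo P δ) (hA : A.Finite)
    (hB : δ '' B ⊆ B) (ha : a ∈ clDelta P δ (B ∪ A)) :
    P.eventualRank δ (A ∪ {a}) B ≤ P.eventualRank δ A B := by
  obtain ⟨c, hc⟩ := P.exists_rk_Jlt_union_singleton_le hδ hA hB ha
  obtain ⟨K, hK⟩ := P.exists_rk_Jlt_le hδ hA hB
  refine Nat.le_of_forall_mul_le_add_mul (K := K + c) fun n => ?_
  calc P.eventualRank δ (A ∪ {a}) B * n ≤ P.rk (Jlt δ (A ∪ {a}) n) B :=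
        P.eventualRank_mul_le_rk_Jlt (hA.union (finite_singleton a)) n
    _ ≤ P.rk (Jlt δ A n) B + c := hc n
    _ ≤ K + c + P.eventualRank δ A B * n := by linarith [hK n]

theorem exists_clIndep_clDelta_le_ncard (hδ : IsQuasiEndo P δ) (hA : A.Finite)
    (hB : δ '' B ⊆ B) :
    ∃ S ⊆ A, clIndep (clDelta P δ) B S ∧ P.eventualRank δ A B ≤ S.ncard := by
  induction h : A.ncard using Nat.strong_induction_on generalizing A with
  | _ n ih =>
  by_cases hdep : ∃ a ∈ A, a ∈ clDelta P δ (B ∪ A \ {a})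
  · obtain ⟨a, ha, hdep⟩ := hdep
    obtain ⟨S, hSA, hS, hle⟩ := ih _ (h ▸ ncard_sdiff_singleton_lt_of_mem ha hA) hA.sdiff rfl
    refine ⟨S, hSA.trans sdiff_subset, hS, le_trans ?_ hle⟩
    simpa [sdiff_union_of_subset (singleton_subset_iff.mpr ha)] using
      P.eventualRank_union_singleton_le hδ hA.sdiff hB hdep
  · push Not at hdep
    refine ⟨A, subset_rfl, hdep, ?_⟩
    calc P.eventualRank δ A B ≤ P.stepRank δ A B 0 := ciInf_le (OrderBot.bddBelow _) 0
      _ ≤ A.ncard := by simpa [stepRank, Jlt_zero] using P.rk_le_ncard hA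

theorem clRank_clDelta_eq_eventualRank (hδ : IsQuasiEndo P δ) (hA : A.Finite)
    (hB : δ '' B ⊆ B) :
    clRank (clDelta P δ) A B = P.eventualRank δ A B := by
  obtain ⟨S, hSA, hS, hle⟩ := P.exists_clIndep_clDelta_le_ncard hδ hA hB
  refine le_antisymm (clRank_le_natCast fun T hTA hT => ?_) ?_
  · rw [← (hA.subset hTA).cast_ncard_eq, Nat.cast_le]
    exact P.ncard_le_eventualRank hδ hA hB hTA hT
  · exact (Nat.cast_le.mpr hle).trans (natCast_ncard_le_clRank hSA hS (hA.subset hSA))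

end Pregeometry

/-- For `A` finite and `B` closed under `δ`, the sequence
`n ↦ rk(δⁿA | J^{n-1}(A) ∪ B)` is non-increasing, hence eventually constant, and its
eventual value is the rank `rk^δ(A | B)` of the matroid `(X, cl^δ)`. -/
theorem rkDelta_eq_eventual_rank {X : Type*} (P : Pregeometry X) (δ : X → X)
    (hδ : IsQuasiEndo P δ) (A B : Set X) (hA : A.Finite) (hB : δ '' B ⊆ B) :
    (∀ n : ℕ, clRank P.cl (δ^[n+1] '' A) (Jlt δ A (n+1) ∪ B)
        ≤ clRank P.cl (δ^[n] '' A) (Jlt δ A n ∪ B)) ∧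
    ∃ N : ℕ, ∀ k : ℕ, N ≤ k →
      clRank P.cl (δ^[k] '' A) (Jlt δ A k ∪ B) = clRank (clDelta P δ) A B := by
  refine ⟨P.clRank_image_iterate_succ_le hδ hB A, ?_⟩
  obtain ⟨N, hN⟩ := P.exists_stepRank_eq hδ hA hB
  refine ⟨N, fun k hk => ?_⟩
  rw [P.clRank_eq_rk (hA.image _), P.clRank_clDelta_eq_eventualRank hδ hA hB, ← hN k hk]
  rfl
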